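/- Suppose P is a regular n-polytope (n ≥ 3) with exactly k vertices, where k ≤ n. Then P is (0, k−1)-flat. -/

import Mathlib

open scoped Classical

/-- An abstract polytope of rank `n`: a partially ordered set with a unique minimal
element (of rank `-1`) and a unique maximal element (of rank `n`), all of whose
maximal chains (flags) have exactly `n + 2` elements, equipped with the induced
rank function, satisfying the diamond condition and strong connectivity. -/
structure AbstractPolytope (n : ℕ) where
  Face : Type
  [instPartialOrder : PartialOrder Face]
  rank : Face → ℤ
  bot : Face
  top : Face
  bot_le : ∀ F : Face, bot ≤ F
  le_top : ∀ F : Face, F ≤ top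
  rank_bot : rank bot = -1
  rank_top : rank top = n
  rank_strictMono : ∀ F G : Face, F < G → rank F < rank G
  flag_card : ∀ Φ : Flag Face, Nat.card Φ = n + 2
  flag_ranks : ∀ (Φ : Flag Face) (j : ℤ), -1 ≤ j → j ≤ (n : ℤ) →
    ∃ F ∈ Φ, rank F = j
  diamond : ∀ F G : Face, F < G → rank G = rank F + 2 →
    Nat.card {H : Face // F < H ∧ H < G} = 2
  strongly_connected : ∀ F G : Face, F < G → rank F + 3 ≤ rank G →
    ∀ H H' : Face, F < H → H < G → F < H' → H' < G →
    Relation.ReflTransGen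
      (fun A B : Face => F < A ∧ A < G ∧ F < B ∧ B < G ∧ (A ≤ B ∨ B ≤ A)) H H'

attribute [instance] AbstractPolytope.instPartialOrder

namespace AbstractPolytope

variable {n : ℕ} (P : AbstractPolytope n)

/-- The number of flags of `P`. -/
noncomputable def numFlags : ℕ := Nat.card (Flag P.Face)

/-- A vertex is a face of rank `0`. -/
def IsVertex (F : P.Face) : Prop := P.rank F = 0

/-- A facet is a face of rank `n - 1`. -/
def IsFacet (F : P.Face) : Prop := P.rank F = (n : ℤ) - 1

/-- The number of vertices of `P`. -/
noncomputable def numVertices : ℕ := Nat.card {F : P.Face // P.IsVertex F}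

/-- The number of facets of `P`. -/
noncomputable def numFacets : ℕ := Nat.card {F : P.Face // P.IsFacet F}

/-- Two faces are incident when they are comparable. -/
def Incident (F G : P.Face) : Prop := F ≤ G ∨ G ≤ F

/-- `P` is `(k, m)`-flat when every face of rank `k` is incident with every face of
rank `m`. -/
def IsKMFlat (k m : ℤ) : Prop :=
  ∀ F G : P.Face, P.rank F = k → P.rank G = m → P.Incident F G

/-- `P` is flat when every vertex is incident with every facet. -/
def IsFlat : Prop := P.IsKMFlat 0 ((n : ℤ) - 1)

/-- Two flags are adjacent when they differ in exactly one element. -/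
def AdjacentFlags (Φ Ψ : Flag P.Face) : Prop :=
  Φ ≠ Ψ ∧ ((Φ : Set P.Face) \ (Ψ : Set P.Face)).ncard = 1 ∧
    ((Ψ : Set P.Face) \ (Φ : Set P.Face)).ncard = 1

/-- Two flags lie in the same orbit of the automorphism group `Γ(P)` (the group of
order automorphisms of `P`). -/
def SameOrbit (Φ Ψ : Flag P.Face) : Prop :=
  ∃ f : P.Face ≃o P.Face, f '' (Φ : Set P.Face) = (Ψ : Set P.Face)

/-- `P` is regular when `Γ(P)` is transitive on flags. -/
def IsRegular : Prop := ∀ Φ Ψ : Flag P.Face, P.SameOrbit Φ Ψ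

/-- `P` is chiral when its flags fall into exactly two orbits under `Γ(P)` and
adjacent flags always lie in different orbits. -/
def IsChiral : Prop :=
  (∃ Φ₁ Φ₂ : Flag P.Face, ¬ P.SameOrbit Φ₁ Φ₂ ∧
      ∀ Φ : Flag P.Face, P.SameOrbit Φ Φ₁ ∨ P.SameOrbit Φ Φ₂) ∧
  ∀ Φ Ψ : Flag P.Face, P.AdjacentFlags Φ Ψ → ¬ P.SameOrbit Φ Ψ

/-- The polytope `Q` is (isomorphic to) the section `G/F` of `P`: there is an order
isomorphism from `Q` onto the interval `[F, G]` of `P`, shifting ranks by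
`rank F + 1`. -/
def IsSection {m : ℕ} (Q : AbstractPolytope m) (F G : P.Face) : Prop :=
  F ≤ G ∧ ∃ e : Q.Face ≃o (Set.Icc F G),
    ∀ x : Q.Face, P.rank (e x : P.Face) = Q.rank x + P.rank F + 1

/-- `P` is equivelar of Schläfli type `{p 1, …, p (n-1)}`: every section between a
face of rank `i - 2` and a face of rank `i + 1` is a polygon with exactly `p i`
vertices (i.e. it contains exactly `p i` faces of rank `i - 1`). -/
def IsSchlafli (p : ℕ → ℕ) : Prop :=
  ∀ i : ℕ, 1 ≤ i → i ≤ n - 1 →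
    ∀ F G : P.Face, F < G → P.rank F = (i : ℤ) - 2 → P.rank G = (i : ℤ) + 1 →
      Nat.card {H : P.Face // F < H ∧ H < G ∧ P.rank H = (i : ℤ) - 1} = p i

/-- `P` is tight of type `{p 1, …, p (n-1)}`: it is equivelar of that type and has
exactly `2 p₁ ⋯ p_{n-1}` flags. -/
def IsTight (p : ℕ → ℕ) : Prop :=
  P.IsSchlafli p ∧ P.numFlags = 2 * ∏ i ∈ Finset.Icc 1 (n - 1), p i

end AbstractPolytope

/-!
A regular polytope has, for each rank `j`, the same number `c j` of vertices on every `j`-face,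
and `c j ≤ c (j + 1)`. If `c j = c (j + 1)` then every `j`-face has the same vertex set as every
`(j + 1)`-face containing it; as the `j`-faces are connected through common `(j + 1)`-faces
(a consequence of strong connectivity), all `j`-faces then have the same vertex set, so `P` is
`(0, j)`-flat, and hence `(0, m)`-flat for all `m ≥ j`. Otherwise `c` increases strictly, starting
from `c 0 = 1`, so a `(k - 1)`-face has at least `k` vertices, i.e. all of them.
-/

namespace AbstractPolytope

open Relation

variable {n : ℕ} {P : AbstractPolytope n} {F G : P.Face}

lemma rank_le_rank (h : F ≤ G) : P.rank F ≤ P.rank G :=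
  h.lt_or_eq.elim (fun h => (P.rank_strictMono _ _ h).le) fun h => h ▸ le_rfl

lemma neg_one_le_rank (F : P.Face) : -1 ≤ P.rank F :=
  P.rank_bot ▸ rank_le_rank (P.bot_le F)

lemma rank_le (F : P.Face) : P.rank F ≤ n :=
  P.rank_top ▸ rank_le_rank (P.le_top F)

lemma eq_of_le_of_rank_le (h : F ≤ G) (hr : P.rank G ≤ P.rank F) : F = G :=
  h.lt_or_eq.resolve_left fun hlt => (P.rank_strictMono _ _ hlt).not_ge hr

protected lemma Incident.symm (h : P.Incident F G) : P.Incident G F := Or.symm h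

lemma le_of_incident_of_rank_le (h : P.Incident F G) (hr : P.rank F ≤ P.rank G) : F ≤ G :=
  h.elim id fun hGF => (eq_of_le_of_rank_le hGF hr).ge

lemma lt_of_incident_of_rank_lt (h : P.Incident F G) (hr : P.rank F < P.rank G) : F < G :=
  (le_of_incident_of_rank_le h hr.le).lt_of_ne (by rintro rfl; exact lt_irrefl _ hr)

lemma eq_of_incident_of_rank_eq (h : P.Incident F G) (hr : P.rank F = P.rank G) : F = G :=
  eq_of_le_of_rank_le (le_of_incident_of_rank_le h hr.le) hr.ge

lemma exists_rank_eq_forall_incident {s : Set P.Face} (hs : IsChain (· ≤ ·) s) {j : ℤ}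
    (hj₁ : -1 ≤ j) (hj₂ : j ≤ n) : ∃ F, P.rank F = j ∧ ∀ x ∈ s, P.Incident x F := by
  obtain ⟨Φ, hsΦ⟩ := hs.exists_subset_flag
  obtain ⟨F, hFΦ, hF⟩ := P.flag_ranks Φ j hj₁ hj₂
  exact ⟨F, hF, fun x hx => Φ.le_or_le (hsΦ hx) hFΦ⟩

lemma ncard_lt_of_mem_flag {Φ : Flag P.Face} (hF : F ∈ Φ) :
    ((Φ : Set P.Face) ∩ Set.Iio F).ncard = (P.rank F + 1).toNat := by
  have hbij : Set.BijOn P.rank ((Φ : Set P.Face) ∩ Set.Iio F) (Set.Ico (-1) (P.rank F)) := by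
    refine ⟨fun G hG => ⟨neg_one_le_rank G, P.rank_strictMono _ _ hG.2⟩,
      fun G hG G' hG' h => eq_of_incident_of_rank_eq (Φ.le_or_le hG.1 hG'.1) h, ?_⟩
    rintro j ⟨hj₁, hj₂⟩
    obtain ⟨G, hGΦ, hG⟩ := P.flag_ranks Φ j hj₁ (by linarith [rank_le F])
    exact ⟨G, ⟨hGΦ, lt_of_incident_of_rank_lt (Φ.le_or_le hGΦ hF) (by omega)⟩, hG⟩
  rw [← hbij.injOn.ncard_image, hbij.image_eq, ← Finset.coe_Ico,
    Set.ncard_coe_finset, Int.card_Ico]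
  omega

/-- `rank F + 1` counts the faces below `F` in any flag. -/
lemma rank_map (f : P.Face ≃o P.Face) (F : P.Face) : P.rank (f F) = P.rank F := by
  obtain ⟨Φ, hF⟩ := Flag.exists_mem F
  have hfF : f F ∈ Flag.map f Φ := Set.mem_image_of_mem f hF
  have hcard := ncard_lt_of_mem_flag hfF
  rw [Flag.coe_map, ← f.image_Iio, ← Set.image_inter f.injective,
    Set.ncard_image_of_injective _ f.injective, ncard_lt_of_mem_flag hF] at hcard
  have := neg_one_le_rank F
  have := neg_one_le_rank (f F)
  omega

lemma IsRegular.exists_map_eq (hreg : P.IsRegular) (h : P.rank F = P.rank G) :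
    ∃ f : P.Face ≃o P.Face, f F = G := by
  obtain ⟨Φ, hF⟩ := Flag.exists_mem F
  obtain ⟨Ψ, hG⟩ := Flag.exists_mem G
  obtain ⟨f, hf⟩ := hreg Φ Ψ
  have hfF : f F ∈ (Ψ : Set P.Face) := hf ▸ Set.mem_image_of_mem f hF
  exact ⟨f, eq_of_incident_of_rank_eq (Ψ.le_or_le hfF hG) (by rw [rank_map, h])⟩

variable (P) in
def vertices (F : P.Face) : Set P.Face := {v | P.IsVertex v ∧ v ≤ F}

lemma vertices_subset (F : P.Face) : P.vertices F ⊆ {v | P.IsVertex v} := fun _ hv => hv.1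

lemma vertices_mono (h : F ≤ G) : P.vertices F ⊆ P.vertices G :=
  fun _ hv => ⟨hv.1, hv.2.trans h⟩

lemma vertices_of_isVertex (hF : P.IsVertex F) : P.vertices F = {F} :=
  Set.eq_singleton_iff_unique_mem.2
    ⟨⟨hF, le_rfl⟩, fun _ hv => (eq_of_le_of_rank_le hv.2 (hF.trans hv.1.symm).le)⟩

lemma image_vertices (f : P.Face ≃o P.Face) (F : P.Face) :
    f '' P.vertices F = P.vertices (f F) := by
  ext v
  simp [f.image_eq_preimage_symm, vertices, IsVertex, rank_map, f.symm_apply_le]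

lemma IsRegular.ncard_vertices_eq (hreg : P.IsRegular) (h : P.rank F = P.rank G) :
    (P.vertices F).ncard = (P.vertices G).ncard := by
  obtain ⟨f, rfl⟩ := hreg.exists_map_eq h
  rw [← image_vertices, Set.ncard_image_of_injective _ f.injective]

variable (P) in
def ShareCoface (j : ℤ) (F F' : P.Face) : Prop :=
  P.rank F = j ∧ P.rank F' = j ∧ ∃ G, P.rank G = j + 1 ∧ F < G ∧ F' < G

lemma isChain_of_mem_Ioo {α : Type*} [PartialOrder α] {a b x y : α} (hx : x ∈ Set.Ioo a b)
    (hy : y ∈ Set.Ioo a b) (hxy : x ≤ y ∨ y ≤ x) :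
    IsChain (· ≤ ·) ({a, x, y, b} : Set α) := by
  obtain ⟨hax, hxb⟩ := hx
  obtain ⟨hay, hyb⟩ := hy
  rcases hxy with hxy | hxy <;>
  · rintro c (rfl | rfl | rfl | rfl) d (rfl | rfl | rfl | rfl) - <;>
    first | (left; order) | (right; order)

lemma exists_mem_Ioo_rank_eq_incident {j : ℤ} {L K X Y : P.Face} (hL : P.rank L < j)
    (hK : j < P.rank K) (hX : X ∈ Set.Ioo L K) (hY : Y ∈ Set.Ioo L K)
    (hXY : X ≤ Y ∨ Y ≤ X) :
    ∃ F ∈ Set.Ioo L K, P.rank F = j ∧ P.Incident X F ∧ P.Incident Y F := by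
  obtain ⟨F, hFj, hF⟩ := exists_rank_eq_forall_incident (j := j) (isChain_of_mem_Ioo hX hY hXY)
    (by linarith [neg_one_le_rank L]) (by linarith [rank_le K])
  exact ⟨F, ⟨lt_of_incident_of_rank_lt (hF L (by simp)) (by omega),
    lt_of_incident_of_rank_lt (hF K (by simp)).symm (by omega)⟩, hFj, hF X (by simp),
    hF Y (by simp)⟩

/-- Induction on `rank K - rank L`: the `j`-faces incident with a face `H` of `(L, K)` all lie in
the smaller section `(L, H)` or `(H, K)`, and strong connectivity joins `A` to `B` through faces
of `(L, K)`. -/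
theorem reflTransGen_shareCoface {j : ℤ} {L K A B : P.Face} (hL : P.rank L < j)
    (hK : j < P.rank K) (hA : A ∈ Set.Ioo L K) (hB : B ∈ Set.Ioo L K) (hAj : P.rank A = j)
    (hBj : P.rank B = j) : ReflTransGen (P.ShareCoface j) A B := by
  induction hd : (P.rank K - P.rank L).toNat using Nat.strong_induction_on
    generalizing L K A B with
  | _ d ih =>
  have around : ∀ H ∈ Set.Ioo L K, ∀ F ∈ Set.Ioo L K, ∀ F' ∈ Set.Ioo L K,
      P.rank F = j → P.rank F' = j → P.Incident H F → P.Incident H F' →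
      ReflTransGen (P.ShareCoface j) F F' := by
    intro H hH F hF F' hF' hFj hF'j hHF hHF'
    have := P.rank_strictMono _ _ hH.1
    have := P.rank_strictMono _ _ hH.2
    rcases lt_trichotomy (P.rank H) j with hHj | hHj | hHj
    · exact ih _ (by omega) hHj hK ⟨lt_of_incident_of_rank_lt hHF (by omega), hF.2⟩
        ⟨lt_of_incident_of_rank_lt hHF' (by omega), hF'.2⟩ hFj hF'j rfl
    · rw [← eq_of_incident_of_rank_eq hHF (by omega),
        ← eq_of_incident_of_rank_eq hHF' (by omega)]
    · exact ih _ (by omega) hL hHj ⟨hF.1, lt_of_incident_of_rank_lt hHF.symm (by omega)⟩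
        ⟨hF'.1, lt_of_incident_of_rank_lt hHF'.symm (by omega)⟩ hFj hF'j rfl
  rcases (by omega : P.rank K = j + 1 ∨ P.rank L + 3 ≤ P.rank K) with hKj | hgap
  · exact .single ⟨hAj, hBj, K, hKj, hA.2, hB.2⟩
  have walk : ∀ X, ReflTransGen
        (fun X Y => L < X ∧ X < K ∧ L < Y ∧ Y < K ∧ (X ≤ Y ∨ Y ≤ X)) X B →
      ∀ F ∈ Set.Ioo L K, P.rank F = j → P.Incident X F →
        ReflTransGen (P.ShareCoface j) F B := by
    intro X hX
    induction hX using Relation.ReflTransGen.head_induction_on with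
    | refl => exact fun F hF hFj hBF => around B hB F hF B hB hFj hBj hBF (Or.inl le_rfl)
    | head hXY _ ihY =>
      obtain ⟨hLX, hXK, hLY, hYK, hXY⟩ := hXY
      intro F hF hFj hXF
      obtain ⟨F', hF', hF'j, hXF', hYF'⟩ :=
        exists_mem_Ioo_rank_eq_incident hL hK ⟨hLX, hXK⟩ ⟨hLY, hYK⟩ hXY
      exact (around _ ⟨hLX, hXK⟩ F hF F' hF' hFj hF'j hXF hXF').trans (ihY F' hF' hF'j hYF')
  exact walk A (P.strongly_connected L K (hA.1.trans hA.2) hgap A B hA.1 hA.2 hB.1 hB.2) A hA hAj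
    (Or.inl le_rfl)

lemma isKMFlat_of_vertices_eq {j : ℤ} (hj₀ : 0 ≤ j) (hjn : j < n)
    (h : ∀ F G : P.Face, P.rank F = j → P.rank G = j + 1 → F < G →
      P.vertices F = P.vertices G) :
    P.IsKMFlat 0 j := by
  have mem_Ioo {F : P.Face} (hF : P.rank F = j) : F ∈ Set.Ioo P.bot P.top :=
    ⟨lt_of_incident_of_rank_lt (Or.inl (P.bot_le F)) (by rw [P.rank_bot]; omega),
      lt_of_incident_of_rank_lt (Or.inl (P.le_top F)) (by rw [P.rank_top]; omega)⟩
  have hconst {F F' : P.Face} (hpath : ReflTransGen (P.ShareCoface j) F F') :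
      P.vertices F = P.vertices F' := by
    induction hpath with
    | refl => rfl
    | tail _ hstep ih =>
      obtain ⟨hG₁, hG₂, G, hG, hG₁G, hG₂G⟩ := hstep
      exact ih.trans ((h _ G hG₁ hG hG₁G).trans (h _ G hG₂ hG hG₂G).symm)
  intro v F hv hF
  obtain ⟨F', hF'j, hvF'⟩ := exists_rank_eq_forall_incident (IsChain.singleton (a := v))
    (by omega) hjn.le
  have hvertices : P.vertices F' = P.vertices F := hconst <|
    reflTransGen_shareCoface (by rw [P.rank_bot]; omega) (by rw [P.rank_top]; omega)
      (mem_Ioo hF'j) (mem_Ioo hF) hF'j hF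
  have hv' : v ∈ P.vertices F' :=
    ⟨hv, le_of_incident_of_rank_le (hvF' v rfl) (by rw [hv]; omega)⟩
  exact Or.inl (hvertices ▸ hv').2

lemma IsKMFlat.mono {j m : ℤ} (h : P.IsKMFlat 0 j) (hj : 0 ≤ j) (hjm : j ≤ m) :
    P.IsKMFlat 0 m := by
  intro v G hv hG
  obtain ⟨F, hFj, hFG⟩ := exists_rank_eq_forall_incident (IsChain.singleton (a := G)) (j := j)
    (by omega) (by linarith [rank_le G])
  have hvF : v ≤ F := le_of_incident_of_rank_le (h v F hv hFj) (by omega)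
  exact Or.inl (hvF.trans (le_of_incident_of_rank_le (hFG G rfl).symm (by omega)))

lemma ncard_vertices_lt_of_not_isKMFlat (hreg : P.IsRegular) (hfin : {v | P.IsVertex v}.Finite)
    {j : ℤ} (hj : 0 ≤ j) (hflat : ¬ P.IsKMFlat 0 j) (hF : P.rank F = j)
    (hG : P.rank G = j + 1) : (P.vertices F).ncard < (P.vertices G).ncard := by
  by_contra! hle
  refine hflat (isKMFlat_of_vertices_eq hj (by linarith [rank_le G]) fun F' G' hF' hG' hFG' => ?_)
  refine Set.eq_of_subset_of_ncard_le (vertices_mono hFG'.le) ?_ (hfin.subset (vertices_subset _))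
  calc (P.vertices G').ncard = (P.vertices G).ncard := hreg.ncard_vertices_eq (by rw [hG', hG])
    _ ≤ (P.vertices F).ncard := hle
    _ = (P.vertices F').ncard := hreg.ncard_vertices_eq (by rw [hF, hF'])

lemma succ_le_ncard_vertices_of_not_isKMFlat (hreg : P.IsRegular)
    (hfin : {v | P.IsVertex v}.Finite) :
    ∀ m : ℕ, ¬ P.IsKMFlat 0 m → ∀ G : P.Face, P.rank G = m →
      m + 1 ≤ (P.vertices G).ncard
  | 0, _, G, hG => by rw [vertices_of_isVertex hG, Set.ncard_singleton]
  | m + 1, hflat, G, hG => by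
    have hflat' : ¬ P.IsKMFlat 0 m := fun h => hflat (h.mono (by positivity) (by push_cast; omega))
    obtain ⟨F, hFm, -⟩ := exists_rank_eq_forall_incident (IsChain.singleton (a := G))
      (j := m) (by omega) (by have := rank_le G; push_cast at hG; omega)
    have := succ_le_ncard_vertices_of_not_isKMFlat hreg hfin m hflat' F hFm
    have := ncard_vertices_lt_of_not_isKMFlat hreg hfin (by positivity) hflat' hFm
      (by rw [hG]; push_cast; ring)
    omega

end AbstractPolytope

open AbstractPolytope in
theorem few_vertices_flat'_general
    (n : ℕ) (P : AbstractPolytope n) (hreg : P.IsRegular)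
    (k : ℕ) (hk : P.numVertices = k) :
    P.IsKMFlat 0 ((k : ℤ) - 1) := by
  cases k with
  | zero =>
    intro v G _ hG
    exact Or.inr (eq_of_le_of_rank_le (P.bot_le G) (by rw [P.rank_bot]; omega) ▸ P.bot_le v)
  | succ m =>
    have hcard : {v | P.IsVertex v}.ncard = m + 1 := by rw [← Nat.card_coe_set_eq]; exact hk
    have hfin : {v | P.IsVertex v}.Finite := Set.finite_of_ncard_ne_zero (by omega)
    rw [show ((m + 1 : ℕ) : ℤ) - 1 = m by push_cast; ring]
    by_contra hflat
    refine hflat fun v G hv hG => Or.inl ?_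
    have hall : P.vertices G = {v | P.IsVertex v} :=
      Set.eq_of_subset_of_ncard_le (vertices_subset G)
        (hcard ▸ succ_le_ncard_vertices_of_not_isKMFlat hreg hfin m hflat G hG) hfin
    exact (hall.symm ▸ hv : v ∈ P.vertices G).2

/-- If `P` is a regular `n`-polytope (`n ≥ 3`) with exactly `k`
vertices, where `k ≤ n`, then `P` is `(0, k - 1)`-flat. -/
theorem few_vertices_flat'
    (n : ℕ) (hn : 3 ≤ n) (P : AbstractPolytope n) (hreg : P.IsRegular)
    (k : ℕ) (hk : P.numVertices = k) (hkle : k ≤ n) :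
    P.IsKMFlat 0 ((k : ℤ) - 1) :=
  few_vertices_flat'_general n P hreg k hk
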